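/- Let R be a complete Noetherian local ring with maximal ideal 𝔪 and finite residue field, X an infinite set, ℱ a non-principal ultrafilter on X, and (M_α)_{α∈X} a bounded family of R-modules. Then there exist a sequence (α_n)_{n≥1} of elements of X and isomorphisms of R-modules f_n : M_{α_{n+1}}/𝔪^n M_{α_{n+1}} → M_{α_n}/𝔪^n M_{α_n} such that Patch_R((M_α)) is isomorphic to the inverse limit of the system (M_{α_n}/𝔪^n M_{α_n}) with transition maps given by reduction followed by f_n. -/

import Mathlib

open Filter IsLocalRing

section Ultra

variable {X : Type*} (ℱ : Ultrafilter X) (A : Type*) [Ring A]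

/-- The submodule of families vanishing on a set of the ultrafilter. -/
def ultraZero (M : X → Type*) [∀ α, AddCommGroup (M α)] [∀ α, Module A (M α)] :
    Submodule A (∀ α, M α) where
  carrier := {x | ∀ᶠ α in (ℱ : Filter X), x α = 0}
  add_mem' := by
    intro a b ha hb
    filter_upwards [ha, hb] with α h1 h2
    simp [h1, h2]
  zero_mem' := Filter.Eventually.of_forall fun _ => rfl
  smul_mem' := by
    intro c x hx
    filter_upwards [hx] with α h
    simp [h]

lemma mem_ultraZero {M : X → Type*} [∀ α, AddCommGroup (M α)] [∀ α, Module A (M α)]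
    {x : ∀ α, M α} :
    x ∈ ultraZero ℱ A M ↔ ∀ᶠ α in (ℱ : Filter X), x α = 0 := Iff.rfl

/-- The ultraproduct of a family of `A`-modules along the ultrafilter `ℱ`. -/
abbrev Ultraproduct (M : X → Type*) [∀ α, AddCommGroup (M α)] [∀ α, Module A (M α)] :=
  (∀ α, M α) ⧸ ultraZero ℱ A M

/-- The map induced on ultraproducts by a family of linear maps. -/
def ultraMap {M N : X → Type*} [∀ α, AddCommGroup (M α)] [∀ α, Module A (M α)]
    [∀ α, AddCommGroup (N α)] [∀ α, Module A (N α)] (f : ∀ α, M α →ₗ[A] N α) :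
    Ultraproduct ℱ A M →ₗ[A] Ultraproduct ℱ A N :=
  Submodule.mapQ _ _ (LinearMap.pi fun α => (f α).comp (LinearMap.proj α)) <| by
    intro x hx
    simp only [Submodule.mem_comap]
    rw [mem_ultraZero]
    filter_upwards [hx] with α h
    simp [h]

lemma ultraMap_mk {M N : X → Type*} [∀ α, AddCommGroup (M α)] [∀ α, Module A (M α)]
    [∀ α, AddCommGroup (N α)] [∀ α, Module A (N α)] (f : ∀ α, M α →ₗ[A] N α)
    (x : ∀ α, M α) :
    ultraMap ℱ A f (Submodule.Quotient.mk x) =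
      Submodule.Quotient.mk (fun α => f α (x α)) := by
  simp [ultraMap, Submodule.mapQ_apply]
  rfl

end Ultra

section SeqLimit

variable (R : Type*) [CommRing R]

/-- The inverse limit of a sequence of modules, realised as a submodule of the product. -/
def seqLimit (P : ℕ → Type*) [∀ n, AddCommGroup (P n)] [∀ n, Module R (P n)]
    (g : ∀ n, P (n + 1) →ₗ[R] P n) : Submodule R (∀ n, P n) where
  carrier := {x | ∀ n, g n (x (n + 1)) = x n}
  add_mem' := by
    intro a b ha hb n
    simp [ha n, hb n]
  zero_mem' := by intro n; simp
  smul_mem' := by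
    intro c x hx n
    simp [hx n]

end SeqLimit

section Patch

variable (R : Type*) [CommRing R] [IsLocalRing R]

/-- The submodule 𝔪ⁿ•M of a module M. -/
abbrev mPow (n : ℕ) (M : Type*) [AddCommGroup M] [Module R M] : Submodule R M :=
  (maximalIdeal R ^ n) • (⊤ : Submodule R M)

/-- The quotient M/𝔪ⁿM. -/
abbrev ModQuot (n : ℕ) (M : Type*) [AddCommGroup M] [Module R M] :=
  M ⧸ mPow R n M

lemma mPow_succ_le (n : ℕ) (M : Type*) [AddCommGroup M] [Module R M] :
    mPow R (n + 1) M ≤ mPow R n M :=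
  Submodule.smul_mono_left (Ideal.pow_le_pow_right n.le_succ)

/-- The reduction map M/𝔪ⁿ⁺¹M → M/𝔪ⁿM. -/
def quotTrans (n : ℕ) (M : Type*) [AddCommGroup M] [Module R M] :
    ModQuot R (n + 1) M →ₗ[R] ModQuot R n M :=
  Submodule.mapQ _ _ LinearMap.id <| by
    intro x hx
    simpa using mPow_succ_le R n M hx

lemma quotTrans_mk (n : ℕ) (M : Type*) [AddCommGroup M] [Module R M] (x : M) :
    quotTrans R n M (Submodule.Quotient.mk x) = Submodule.Quotient.mk x := by
  simp [quotTrans, Submodule.mapQ_apply]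

variable {X : Type*} (ℱ : Ultrafilter X)

/-- The n-th level of the patching construction: the ultraproduct of the quotients M α/𝔪ⁿ. -/
abbrev UP (M : X → Type*) [∀ α, AddCommGroup (M α)] [∀ α, Module R (M α)] (n : ℕ) :=
  Ultraproduct ℱ R (fun α => ModQuot R n (M α))

/-- The transition maps between the levels of the patching construction. -/
def upTrans (M : X → Type*) [∀ α, AddCommGroup (M α)] [∀ α, Module R (M α)] (n : ℕ) :
    UP R ℱ M (n + 1) →ₗ[R] UP R ℱ M n :=
  ultraMap ℱ R (fun α => quotTrans R n (M α))

/-- The patching module of a family of R-modules: the inverse limit over n of the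
ultraproducts of the quotients M α/𝔪ⁿ. -/
def PatchS (M : X → Type*) [∀ α, AddCommGroup (M α)] [∀ α, Module R (M α)] :
    Submodule R (∀ n, UP R ℱ M n) :=
  seqLimit R (fun n => UP R ℱ M n) (fun n => upTrans R ℱ M n)

lemma mem_PatchS {M : X → Type*} [∀ α, AddCommGroup (M α)] [∀ α, Module R (M α)]
    {x : ∀ n, UP R ℱ M n} :
    x ∈ PatchS R ℱ M ↔ ∀ n, upTrans R ℱ M n (x (n + 1)) = x n := Iff.rfl

-- functoriality of ModQuot
lemma mapQ_cond {M N : Type*} [AddCommGroup M] [Module R M] [AddCommGroup N] [Module R N]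
    (f : M →ₗ[R] N) (n : ℕ) : mPow R n M ≤ (mPow R n N).comap f := by
  rw [← Submodule.map_le_iff_le_comap, Submodule.map_smul'']
  exact Submodule.smul_mono le_rfl le_top

/-- The map induced by f : M →ₗ N on the quotients modulo 𝔪ⁿ. -/
def modQuotMap (n : ℕ) {M N : Type*} [AddCommGroup M] [Module R M] [AddCommGroup N]
    [Module R N] (f : M →ₗ[R] N) : ModQuot R n M →ₗ[R] ModQuot R n N :=
  Submodule.mapQ _ _ f (mapQ_cond R f n)

lemma modQuotMap_mk (n : ℕ) {M N : Type*} [AddCommGroup M] [Module R M] [AddCommGroup N]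
    [Module R N] (f : M →ₗ[R] N) (x : M) :
    modQuotMap R n f (Submodule.Quotient.mk x) = Submodule.Quotient.mk (f x) := by
  simp [modQuotMap, Submodule.mapQ_apply]

lemma quotTrans_modQuotMap {M N : Type*} [AddCommGroup M] [Module R M] [AddCommGroup N]
    [Module R N] (f : M →ₗ[R] N) (n : ℕ) (q : ModQuot R (n + 1) M) :
    quotTrans R n N (modQuotMap R (n + 1) f q) = modQuotMap R n f (quotTrans R n M q) := by
  obtain ⟨z, rfl⟩ := Submodule.Quotient.mk_surjective _ q
  rw [modQuotMap_mk, quotTrans_mk, quotTrans_mk, modQuotMap_mk]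

lemma level_compat {M N : X → Type*} [∀ α, AddCommGroup (M α)] [∀ α, Module R (M α)]
    [∀ α, AddCommGroup (N α)] [∀ α, Module R (N α)] (f : ∀ α, M α →ₗ[R] N α) (n : ℕ)
    (u : UP R ℱ M (n + 1)) :
    upTrans R ℱ N n (ultraMap ℱ R (fun α => modQuotMap R (n + 1) (f α)) u) =
      ultraMap ℱ R (fun α => modQuotMap R n (f α)) (upTrans R ℱ M n u) := by
  obtain ⟨y, rfl⟩ := Submodule.Quotient.mk_surjective _ u
  simp only [upTrans]
  rw [ultraMap_mk, ultraMap_mk, ultraMap_mk, ultraMap_mk]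
  exact congrArg _ (funext fun α => quotTrans_modQuotMap R (f α) n (y α))

/-- The map induced on patching modules by a family of linear maps. -/
def patchMap {M N : X → Type*} [∀ α, AddCommGroup (M α)] [∀ α, Module R (M α)]
    [∀ α, AddCommGroup (N α)] [∀ α, Module R (N α)] (f : ∀ α, M α →ₗ[R] N α) :
    ↥(PatchS R ℱ M) →ₗ[R] ↥(PatchS R ℱ N) :=
  LinearMap.codRestrict _
    ((LinearMap.pi fun n =>
        (ultraMap ℱ R fun α => modQuotMap R n (f α)).comp (LinearMap.proj n)).comp
      (PatchS R ℱ M).subtype)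
    (by
      intro x
      rw [mem_PatchS]
      intro n
      simp only [LinearMap.comp_apply, LinearMap.pi_apply, LinearMap.proj_apply,
        Submodule.subtype_apply]
      rw [level_compat, x.2 n])

end Patch

/-! For each `n`, the modules `M α/𝔪ⁿ` are quotients of the finite module `(R/𝔪ⁿ)ˢ`, so their
isomorphism classes (recorded by the kernels of the presentations) range over a finite set and
the ultrafilter selects one class at every level. Choosing `a n` in the selected classes of all
levels `k ≤ n` makes the `n`-th level of the patching module isomorphic to `M (a n)/𝔪ⁿ`, since an
ultraproduct of modules eventually isomorphic to a fixed finite module is that module. The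
transported transition maps are surjective and kill `𝔪ⁿ`, so they factor through
`M (a (n+1))/𝔪ⁿ`, and these factorisations are surjections between finite modules of the same
size, hence isomorphisms. -/

open Function

section Ultraproduct

variable {X : Type*} (ℱ : Ultrafilter X) {A : Type*} [Ring A]

lemma Ultrafilter.exists_eventually_eq {V : Type*} [Finite V] (y : X → V) :
    ∃ v, ∀ᶠ α in (ℱ : Filter X), y α = v := by
  obtain ⟨v, hv⟩ := (ℱ.map y).eq_pure_of_finite
  exact ⟨v, show {v} ∈ ℱ.map y by simp [hv]⟩

variable {M N : X → Type*} [∀ α, AddCommGroup (M α)] [∀ α, Module A (M α)]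
  [∀ α, AddCommGroup (N α)] [∀ α, Module A (N α)]

lemma ultraMap_surjective {f : ∀ α, M α →ₗ[A] N α} (hf : ∀ α, Surjective (f α)) :
    Surjective (ultraMap ℱ A f) := by
  intro z
  obtain ⟨y, rfl⟩ := Submodule.Quotient.mk_surjective _ z
  refine ⟨Submodule.Quotient.mk fun α => surjInv (hf α) (y α), ?_⟩
  rw [ultraMap_mk]
  exact congrArg _ (funext fun α => surjInv_eq (hf α) (y α))

lemma ultraMap_bijective {f : ∀ α, M α →ₗ[A] N α}
    (hf : ∀ᶠ α in (ℱ : Filter X), Bijective (f α)) : Bijective (ultraMap ℱ A f) := by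
  classical
  constructor
  · rw [injective_iff_map_eq_zero]
    intro z hz
    obtain ⟨x, rfl⟩ := Submodule.Quotient.mk_surjective _ z
    rw [ultraMap_mk, Submodule.Quotient.mk_eq_zero, mem_ultraZero] at hz
    rw [Submodule.Quotient.mk_eq_zero, mem_ultraZero]
    filter_upwards [hz, hf] with α hzero hbij
    exact hbij.1 (by simpa using hzero)
  · intro z
    obtain ⟨y, rfl⟩ := Submodule.Quotient.mk_surjective _ z
    refine ⟨Submodule.Quotient.mk
      fun α => if h : Bijective (f α) then surjInv h.2 (y α) else 0, ?_⟩
    rw [ultraMap_mk, Submodule.Quotient.eq, mem_ultraZero]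
    filter_upwards [hf] with α h
    simp only [Pi.sub_apply, dif_pos h, surjInv_eq h.2, sub_self]

variable (A) in
def ultraDiag (V : Type*) [AddCommGroup V] [Module A V] :
    V →ₗ[A] Ultraproduct ℱ A (fun _ : X => V) :=
  (ultraZero ℱ A fun _ : X => V).mkQ ∘ₗ LinearMap.pi fun _ => LinearMap.id

lemma ultraDiag_bijective (V : Type*) [AddCommGroup V] [Module A V] [Finite V] :
    Bijective (ultraDiag ℱ A V) := by
  constructor
  · rw [injective_iff_map_eq_zero]
    intro v hv
    have hv' : ∀ᶠ _ in (ℱ : Filter X), v = 0 := (Submodule.Quotient.mk_eq_zero _).1 hv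
    exact hv'.exists.elim fun _ h => h
  · intro z
    obtain ⟨y, rfl⟩ := Submodule.Quotient.mk_surjective _ z
    obtain ⟨v, hv⟩ := ℱ.exists_eventually_eq y
    refine ⟨v, (Submodule.Quotient.eq _).2 ?_⟩
    filter_upwards [hv] with α h
    simp [h]

lemma nonempty_ultraproduct_equiv_of_eventually {V : Type*} [AddCommGroup V] [Module A V]
    [Finite V] (h : ∀ᶠ α in (ℱ : Filter X), Nonempty (M α ≃ₗ[A] V)) :
    Nonempty (Ultraproduct ℱ A M ≃ₗ[A] V) := by
  classical
  let e : ∀ α, M α →ₗ[A] V := fun α => if hα : Nonempty (M α ≃ₗ[A] V) then hα.some else 0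
  have he : ∀ᶠ α in (ℱ : Filter X), Bijective (e α) := by
    filter_upwards [h] with α hα
    simpa [e, dif_pos hα] using hα.some.bijective
  let toConst : Ultraproduct ℱ A M ≃ₗ[A] Ultraproduct ℱ A fun _ : X => V :=
    .ofBijective (ultraMap ℱ A e) (ultraMap_bijective ℱ he)
  exact ⟨toConst.trans (LinearEquiv.ofBijective _ (ultraDiag_bijective ℱ V)).symm⟩

end Ultraproduct

section SeqLimit

variable {R : Type*} [CommRing R]

def seqLimitCongr {P Q : ℕ → Type*} [∀ n, AddCommGroup (P n)] [∀ n, Module R (P n)]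
    [∀ n, AddCommGroup (Q n)] [∀ n, Module R (Q n)]
    {g : ∀ n, P (n + 1) →ₗ[R] P n} {g' : ∀ n, Q (n + 1) →ₗ[R] Q n}
    (e : ∀ n, P n ≃ₗ[R] Q n) (he : ∀ n x, e n (g n x) = g' n (e (n + 1) x)) :
    seqLimit R P g ≃ₗ[R] seqLimit R Q g' where
  toFun x := ⟨fun n => e n (x.1 n), fun n => by rw [← he, x.2 n]⟩
  invFun y := ⟨fun n => (e n).symm (y.1 n), fun n => (e n).injective <| by
    rw [he, LinearEquiv.apply_symm_apply, LinearEquiv.apply_symm_apply, y.2 n]⟩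
  map_add' x y := Subtype.ext <| funext fun n => map_add (e n) _ _
  map_smul' r x := Subtype.ext <| funext fun n => map_smul (e n) r _
  left_inv x := Subtype.ext <| funext fun n => (e n).symm_apply_apply _
  right_inv y := Subtype.ext <| funext fun n => (e n).apply_symm_apply _

end SeqLimit

section ModQuot

variable {R : Type*} [CommRing R] [IsLocalRing R]

lemma mPow_modQuot_eq_bot (n : ℕ) (M : Type*) [AddCommGroup M] [Module R M] :
    mPow R n (ModQuot R n M) = ⊥ := by
  have : mPow R n (ModQuot R n M) = (mPow R n M).map (mPow R n M).mkQ := by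
    rw [Submodule.map_smul'', Submodule.map_top, Submodule.range_mkQ]
  rw [this, Submodule.mkQ_map_self]

variable {M N : Type*} [AddCommGroup M] [Module R M] [AddCommGroup N] [Module R N]

lemma modQuotMap_surjective (n : ℕ) {f : M →ₗ[R] N} (hf : Surjective f) :
    Surjective (modQuotMap R n f) := by
  intro z
  obtain ⟨y, rfl⟩ := Submodule.Quotient.mk_surjective _ z
  obtain ⟨x, rfl⟩ := hf y
  exact ⟨Submodule.Quotient.mk x, modQuotMap_mk R n f x⟩

lemma quotTrans_surjective (n : ℕ) : Surjective (quotTrans R n M) := by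
  intro z
  obtain ⟨x, rfl⟩ := Submodule.Quotient.mk_surjective _ z
  exact ⟨Submodule.Quotient.mk x, quotTrans_mk R n M x⟩

lemma finite_modQuot [IsNoetherianRing R] [Finite (ResidueField R)] [Module.Finite R M]
    (n : ℕ) : Finite (ModQuot R n M) := by
  have : Finite (R ⧸ maximalIdeal R) := ‹_›
  have := Ideal.finite_quotient_pow (IsNoetherian.noetherian (maximalIdeal R)) n
  exact Module.finite_of_finite (R ⧸ maximalIdeal R ^ n)

lemma nonempty_modQuot_equiv_of_ker_eq {P : Type*} [AddCommGroup P] [Module R P] (n : ℕ)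
    {f : P →ₗ[R] M} {g : P →ₗ[R] N} (hf : Surjective f) (hg : Surjective g)
    (h : LinearMap.ker (modQuotMap R n f) = LinearMap.ker (modQuotMap R n g)) :
    Nonempty (ModQuot R n M ≃ₗ[R] ModQuot R n N) :=
  ⟨((modQuotMap R n f).quotKerEquivOfSurjective (modQuotMap_surjective n hf)).symm.trans <|
    (Submodule.quotEquivOfEq _ _ h).trans <|
      (modQuotMap R n g).quotKerEquivOfSurjective (modQuotMap_surjective n hg)⟩

lemma exists_linearEquiv_comp_quotTrans {n : ℕ} [Finite (ModQuot R n M)]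
    {t : ModQuot R (n + 1) M →ₗ[R] ModQuot R n N} (ht : Surjective t)
    (hMN : Nonempty (ModQuot R n M ≃ₗ[R] ModQuot R n N)) :
    ∃ f : ModQuot R n M ≃ₗ[R] ModQuot R n N, f.toLinearMap ∘ₗ quotTrans R n M = t := by
  have hker : mPow R n M ≤ LinearMap.ker (t ∘ₗ (mPow R (n + 1) M).mkQ) := fun x hx => by
    simpa [mPow_modQuot_eq_bot] using mapQ_cond R (t ∘ₗ (mPow R (n + 1) M).mkQ) n hx
  set f := (mPow R n M).liftQ _ hker
  have hf : f ∘ₗ quotTrans R n M = t := by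
    refine Submodule.linearMap_qext _ (LinearMap.ext fun x => ?_)
    simp [f, quotTrans_mk]
  have hsurj : Surjective f := by
    refine Surjective.of_comp (g := quotTrans R n M) ?_
    rwa [← LinearMap.coe_comp, hf]
  have hinj : Injective f := (Finite.injective_iff_surjective_of_equiv hMN.some.toEquiv).2 hsurj
  exact ⟨.ofBijective f ⟨hinj, hsurj⟩, hf⟩

lemma exists_seqLimit_equiv_modQuot {P : ℕ → Type*}
    [∀ n, AddCommGroup (P n)] [∀ n, Module R (P n)] {g : ∀ n, P (n + 1) →ₗ[R] P n}
    (hg : ∀ n, Surjective (g n)) {N : ℕ → Type*} [∀ n, AddCommGroup (N n)]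
    [∀ n, Module R (N n)] [∀ n, Finite (ModQuot R n (N (n + 1)))]
    (ε : ∀ n, P n ≃ₗ[R] ModQuot R n (N n))
    (hN : ∀ n, Nonempty (ModQuot R n (N (n + 1)) ≃ₗ[R] ModQuot R n (N n))) :
    ∃ f : ∀ n, ModQuot R n (N (n + 1)) ≃ₗ[R] ModQuot R n (N n),
      Nonempty (seqLimit R P g ≃ₗ[R] seqLimit R (fun n => ModQuot R n (N n))
        fun n => (f n).toLinearMap ∘ₗ quotTrans R n (N (n + 1))) := by
  let t n := (ε n).toLinearMap ∘ₗ g n ∘ₗ (ε (n + 1)).symm.toLinearMap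
  have ht n : Surjective (t n) :=
    (ε n).surjective.comp ((hg n).comp (ε (n + 1)).symm.surjective)
  choose f hf using fun n => exists_linearEquiv_comp_quotTrans (ht n) (hN n)
  refine ⟨f, ⟨seqLimitCongr ε fun n x => ?_⟩⟩
  rw [hf]
  simp [t]

end ModQuot

theorem patch_selection_general
    (R : Type*) [CommRing R] [IsLocalRing R] [IsNoetherianRing R]
    [Finite (IsLocalRing.ResidueField R)]
    {X : Type*} (ℱ : Ultrafilter X)
    (M : X → Type*) [∀ α, AddCommGroup (M α)] [∀ α, Module R (M α)]
    (s : ℕ) (hbdd : ∀ α, ∃ f : (Fin s → R) →ₗ[R] M α, Function.Surjective f) :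
    ∃ (a : ℕ → X) (f : ∀ n, ModQuot R n (M (a (n + 1))) ≃ₗ[R] ModQuot R n (M (a n))),
      Nonempty (↥(PatchS R ℱ M) ≃ₗ[R]
        ↥(seqLimit R (fun n => ModQuot R n (M (a n)))
          (fun n => (f n).toLinearMap ∘ₗ quotTrans R n (M (a (n + 1)))))) := by
  choose π hπ using hbdd
  have hfin n α : Finite (ModQuot R n (M α)) :=
    have := Module.Finite.of_surjective (π α) (hπ α)
    finite_modQuot n
  let K n α := LinearMap.ker (modQuotMap R n (π α))
  have hK n : ∃ c, ∀ᶠ α in (ℱ : Filter X), K n α = c :=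
    have := finite_modQuot (R := R) (M := Fin s → R) n
    ℱ.exists_eventually_eq (K n)
  choose c hc using hK
  have ha n : ∃ α, ∀ k ≤ n, K k α = c k :=
    ((Set.finite_Iic n).eventually_all.2 fun k _ => hc k).exists
  choose a ha using ha
  have hequiv n α β (h : K n α = K n β) :=
    nonempty_modQuot_equiv_of_ker_eq n (hπ α) (hπ β) h
  obtain ⟨f, hf⟩ := exists_seqLimit_equiv_modQuot (N := fun n => M (a n))
    (fun n => ultraMap_surjective ℱ fun α => quotTrans_surjective n)
    (fun n => (nonempty_ultraproduct_equiv_of_eventually ℱ <| by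
      filter_upwards [hc n] with α hα using hequiv n _ _ (hα.trans (ha n n le_rfl).symm)).some)
    (fun n => hequiv n _ _ ((ha (n + 1) n n.le_succ).trans (ha n n le_rfl).symm))
  exact ⟨a, f, hf⟩

/-- Selection lemma.  Let R be a complete Noetherian local ring with finite
residue field, ℱ a non-principal ultrafilter on an infinite set X and (M α) a bounded family
of R-modules.  Then there are a sequence (a n) of indices and isomorphisms
f n : M (a (n+1))/𝔪ⁿ ≃ M (a n)/𝔪ⁿ such that the patching module is isomorphic to the inverse
limit of the system (M (a n)/𝔪ⁿ) with transition maps given by reduction followed by f n. -/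
theorem patch_selection
    (R : Type*) [CommRing R] [IsLocalRing R] [IsNoetherianRing R]
    [IsAdicComplete (IsLocalRing.maximalIdeal R) R] [Finite (IsLocalRing.ResidueField R)]
    {X : Type*} [Infinite X] (ℱ : Ultrafilter X) (hℱ : ∀ x : X, ℱ ≠ pure x)
    (M : X → Type*) [∀ α, AddCommGroup (M α)] [∀ α, Module R (M α)]
    (s : ℕ) (hbdd : ∀ α, ∃ f : (Fin s → R) →ₗ[R] M α, Function.Surjective f) :
    ∃ (a : ℕ → X) (f : ∀ n, ModQuot R n (M (a (n + 1))) ≃ₗ[R] ModQuot R n (M (a n))),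
      Nonempty (↥(PatchS R ℱ M) ≃ₗ[R]
        ↥(seqLimit R (fun n => ModQuot R n (M (a n)))
          (fun n => (f n).toLinearMap ∘ₗ quotTrans R n (M (a (n + 1)))))) :=
  patch_selection_general R ℱ M s hbdd
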